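/- Fix k ∈ ℕ and the normalised stochastic basis (b_n)_{n=1}^N of F(L_k) described below. Then for every n ∈ {1,…,N}, ‖b_n‖ ≤ 4^{k+1−g(n)}. -/

import Mathlib

open Finset

noncomputable section
open scoped Classical

namespace TCS

def indic {V : Type*} [DecidableEq V] (x : V) : V → ℝ := fun z => if z = x then 1 else 0

def mol {V : Type*} [DecidableEq V] (x y : V) : V → ℝ := fun z => indic x z - indic y z

def tcNorm {V : Type*} [Fintype V] (d : V → V → ℝ) (x0 : V) (μ : V → ℝ) : ℝ :=
  sSup {c : ℝ | ∃ f : V → ℝ, f x0 = 0 ∧ (∀ x y, |f x - f y| ≤ d x y) ∧ c = ∑ x, μ x * f x}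

/-- The `ℓ₁`-distortion of a basis of the free space over a finite metric space `V`
with basepoint `x0`, the basis being indexed by the points `n ≠ x0`. -/
def d1BasisV {V : Type*} [Fintype V] [DecidableEq V] (d : V → V → ℝ) (x0 : V)
    (b : V → V → ℝ) (bstar : V → (V → ℝ) → ℝ) : ℝ :=
  sSup {c : ℝ | ∃ μ : V → ℝ, (∑ x, μ x = 0) ∧ tcNorm d x0 μ = 1 ∧
    c = ∑ n ∈ Finset.univ.filter (· ≠ x0), |bstar n μ| * tcNorm d x0 (b n)}

/-- Vertices of the Laakso graph `L_k` (here `L_0` is a single edge, and `L_{k+1}`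
is obtained from `L_k` by replacing each edge, encoded by a word `Fin k → Fin 6`,
by a copy of the six-point gadget with four new vertices). -/
def LaaV : ℕ → Type
  | 0 => Fin 2
  | (k+1) => LaaV k ⊕ ((Fin k → Fin 6) × Fin 4)

instance LaaVDecEq : (k : ℕ) → DecidableEq (LaaV k)
  | 0 => inferInstanceAs (DecidableEq (Fin 2))
  | (k+1) =>
    letI := LaaVDecEq k
    inferInstanceAs (DecidableEq (LaaV k ⊕ ((Fin k → Fin 6) × Fin 4)))

instance LaaVFintype : (k : ℕ) → Fintype (LaaV k)
  | 0 => inferInstanceAs (Fintype (Fin 2))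
  | (k+1) =>
    letI := LaaVFintype k
    inferInstanceAs (Fintype (LaaV k ⊕ ((Fin k → Fin 6) × Fin 4)))

/-- Endpoints of the edge of `L_k` encoded by the word `w`.  The four new
vertices of a gadget are labelled `0 = b`, `1 = u`, `2 = v`, `3 = c`, and the six
gadget edges are `0 = {a,b}`, `1 = {b,u}`, `2 = {b,v}`, `3 = {u,c}`, `4 = {v,c}`,
`5 = {c,d}`, where `a, d` are the endpoints of the replaced edge. -/
def ep : (k : ℕ) → (Fin k → Fin 6) → LaaV k × LaaV k
  | 0, _ => ((0 : Fin 2), (1 : Fin 2))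
  | (k+1), w =>
    let w' : Fin k → Fin 6 := fun i => w i.castSucc
    let p := ep k w'
    match (w (Fin.last k)).val with
    | 0 => ((Sum.inl p.1 : LaaV (k+1)), Sum.inr (w', (0 : Fin 4)))
    | 1 => (Sum.inr (w', 0), Sum.inr (w', 1))
    | 2 => (Sum.inr (w', 0), Sum.inr (w', 2))
    | 3 => (Sum.inr (w', 1), Sum.inr (w', 3))
    | 4 => (Sum.inr (w', 2), Sum.inr (w', 3))
    | _ => (Sum.inr (w', 3), Sum.inl p.2)

/-- The Laakso graph `L_k`. -/
def laakso (k : ℕ) : SimpleGraph (LaaV k) :=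
  SimpleGraph.fromRel (fun a b => ∃ w : Fin k → Fin 6, ep k w = (a, b))

/-- The generation of a vertex of `L_k`: the first level at which it appears
(all six vertices of `L_1` have generation `1`). -/
def gen : (k : ℕ) → LaaV k → ℕ
  | 0, _ => 1
  | (k+1), x => Sum.elim (fun y => gen k y) (fun _ => k+1) x

/-- The canonical embedding `V(L_j) ⊆ V(L_k)` for `j ≤ k`. -/
def embLe : (j k : ℕ) → j ≤ k → LaaV j → LaaV k
  | j, 0, h, x => (Nat.le_zero.mp h) ▸ x
  | j, (k+1), h, x =>
    if hj : j = k + 1 then hj ▸ x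
    else (Sum.inl (embLe j k (Nat.lt_succ_iff.mp (Nat.lt_of_le_of_ne h hj)) x) : LaaV (k+1))

/-- `b` is the normalised stochastic basis of `F(L_k)` (with basepoint `x0`)
described in the paper: `b_n = δ_n` for generation-one vertices, and
`b_n = δ_n - (d_{g(n)}(n, e(n)⁻) δ_{e(n)⁺} + d_{g(n)}(n, e(n)⁺) δ_{e(n)⁻}) / 4`
for vertices of generation `≥ 2`. -/
def IsLaaksoBasis (k : ℕ) (x0 : LaaV k) (b : LaaV k → LaaV k → ℝ) : Prop :=
  (∀ n : LaaV k, gen k n = 1 → n ≠ x0 → b n = fun z => indic n z - indic x0 z) ∧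
  ∀ (j : ℕ) (hj : j + 1 ≤ k) (w : Fin j → Fin 6) (t : Fin 4),
    b (embLe (j+1) k hj (Sum.inr (w, t))) = fun z =>
      indic (embLe (j+1) k hj (Sum.inr (w, t))) z -
        (((laakso (j+1)).dist (Sum.inr (w, t)) (Sum.inl (ep j w).1) : ℝ) *
            indic (embLe j k (Nat.le_of_succ_le hj) (ep j w).2) z +
          ((laakso (j+1)).dist (Sum.inr (w, t)) (Sum.inl (ep j w).2) : ℝ) *
            indic (embLe j k (Nat.le_of_succ_le hj) (ep j w).1) z) / 4

/-- `bstar` is the family of coordinate functionals of the basis `b` of `F(L_k)`. -/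
def IsLaaCoord (k : ℕ) (x0 : LaaV k) (b : LaaV k → LaaV k → ℝ)
    (bstar : LaaV k → (LaaV k → ℝ) → ℝ) : Prop :=
  ∀ μ : LaaV k → ℝ, (∑ x, μ x = 0) → ∀ z,
    μ z = ∑ n ∈ Finset.univ.filter (· ≠ x0), bstar n μ * b n z

end TCS

/-!
A vertex `n` of generation `j + 1` lies in the gadget that replaced an edge `{A, D}` of `L_j`.
With `a = d_{j+1}(n, A)` and `c = d_{j+1}(n, D)` one has `a + c = 4`: the upper bound is read off
the gadget, the lower bound comes from the height function, a `1`-Lipschitz map of `L_{j+1}` to `ℤ`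
that separates `A` from `D` by `4`. Hence, for `f` `1`-Lipschitz,
`⟨b_n, f⟩ = (a (f n - f D) + c (f n - f A)) / 4 ≤ (a d_k(n, D) + c d_k(n, A)) / 4`.
Passing from `L_{j+1}` to `L_k` stretches every edge into a path of length `4^{k-j-1}`, so this is
at most `4^{k-j-1} a c / 2 ≤ 2 · 4^{k-j-1}`. In generation one, `b_n = δ_n - δ_0` with both points
in the copy of `L_1`, whose diameter `4` is stretched to at most `4^k`.
-/

namespace TCS

open SimpleGraph

section FreeSpace

variable {V : Type*} [Fintype V] {d : V → V → ℝ}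

lemma sum_indic_mul [DecidableEq V] (y : V) (f : V → ℝ) : ∑ x, indic y x * f x = f y := by
  simp [indic, ite_mul]

lemma tcNorm_le {x0 : V} {μ : V → ℝ} {C : ℝ} (hC : 0 ≤ C)
    (h : ∀ f : V → ℝ, (∀ x y, |f x - f y| ≤ d x y) → ∑ x, μ x * f x ≤ C) :
    tcNorm d x0 μ ≤ C :=
  Real.sSup_le (by rintro _ ⟨f, -, hf, rfl⟩; exact h f hf) hC

lemma tcNorm_indic_sub_le [DecidableEq V] (hd : ∀ x y, 0 ≤ d x y) (x0 n y : V) :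
    tcNorm d x0 (fun z => indic n z - indic y z) ≤ d n y := by
  refine tcNorm_le (hd n y) fun f hf => ?_
  simp only [sub_mul, Finset.sum_sub_distrib, sum_indic_mul]
  exact (le_abs_self _).trans (hf n y)

lemma tcNorm_indic_sub_avg_le [DecidableEq V] (hd : ∀ x y, 0 ≤ d x y) (x0 n D A : V)
    {a c : ℝ} (ha : 0 ≤ a) (hc : 0 ≤ c) (hac : a + c = 4) :
    tcNorm d x0 (fun z => indic n z - (a * indic D z + c * indic A z) / 4)
      ≤ (a * d n D + c * d n A) / 4 := by
  refine tcNorm_le (div_nonneg (add_nonneg (mul_nonneg ha (hd n D))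
    (mul_nonneg hc (hd n A))) zero_le_four) fun f hf => ?_
  simp only [sub_mul, add_mul, div_mul_eq_mul_div, mul_assoc, Finset.sum_sub_distrib,
    ← Finset.sum_div, Finset.sum_add_distrib, ← Finset.mul_sum, sum_indic_mul]
  have hD := mul_le_mul_of_nonneg_left ((le_abs_self _).trans (hf n D)) ha
  have hA := mul_le_mul_of_nonneg_left ((le_abs_self _).trans (hf n A)) hc
  have hn : f n = (a + c) * f n / 4 := by rw [hac]; ring
  linarith

end FreeSpace

lemma one_le_gen : ∀ (k : ℕ) (x : LaaV k), 1 ≤ gen k x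
  | 0, _ => le_rfl
  | k + 1, Sum.inl x => one_le_gen k x
  | k + 1, Sum.inr _ => Nat.le_add_left 1 k

lemma embLe_self (k : ℕ) (h : k ≤ k) (x : LaaV k) : embLe k k h x = x := by
  cases k <;> simp [embLe]

lemma embLe_succ (j k : ℕ) (h : j ≤ k) (h' : j ≤ k + 1) (x : LaaV j) :
    embLe j (k + 1) h' x = Sum.inl (embLe j k h x) := by
  rw [embLe]
  exact dif_neg (show j ≠ k + 1 by omega)

lemma gen_embLe : ∀ (k j : ℕ) (h : j ≤ k) (x : LaaV j), gen k (embLe j k h x) = gen j x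
  | 0, j, h, x => by
    obtain rfl : j = 0 := by omega
    rw [embLe_self]
  | k + 1, j, h, x => by
    by_cases hj : j = k + 1
    · subst hj; rw [embLe_self]
    · rw [embLe_succ j k (by omega) h]
      exact gen_embLe k j _ x

lemma embLe_embLe : ∀ (k j m : ℕ) (h1 : j ≤ m) (h2 : m ≤ k) (x : LaaV j),
    embLe m k h2 (embLe j m h1 x) = embLe j k (h1.trans h2) x
  | 0, j, m, h1, h2, x => by
    obtain rfl : m = 0 := by omega
    rw [embLe_self]
  | k + 1, j, m, h1, h2, x => by
    by_cases hm : m = k + 1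
    · subst hm; rw [embLe_self]
    · rw [embLe_succ m k (by omega) h2, embLe_succ j k (by omega),
        embLe_embLe k j m h1 (by omega)]

lemma embLe_inl {j k : ℕ} (hj : j + 1 ≤ k) (x : LaaV j) :
    embLe (j + 1) k hj (Sum.inl x) = embLe j k (Nat.le_of_succ_le hj) x := by
  rw [← embLe_embLe k j (j + 1) (Nat.le_succ j) hj, embLe_succ j j le_rfl, embLe_self]

lemma exists_eq_embLe_inr_of_two_le_gen : ∀ (k : ℕ) (v : LaaV k), 2 ≤ gen k v →
    ∃ (j : ℕ) (hj : j + 1 ≤ k) (w : Fin j → Fin 6) (t : Fin 4),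
      v = embLe (j + 1) k hj (Sum.inr (w, t))
  | 0, _, hv => absurd hv (by simp [gen])
  | k + 1, Sum.inl x, hv => by
    obtain ⟨j, hj, w, t, rfl⟩ := exists_eq_embLe_inr_of_two_le_gen k x hv
    exact ⟨j, by omega, w, t, (embLe_succ (j + 1) k hj _ _).symm⟩
  | k + 1, Sum.inr (w, t), _ =>
    ⟨k, le_rfl, w, t, (embLe_self (k + 1) le_rfl (Sum.inr (w, t))).symm⟩

lemma exists_eq_embLe_one_of_gen_eq_one : ∀ (k : ℕ) (hk : 1 ≤ k) (v : LaaV k), gen k v = 1 →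
    ∃ u : LaaV 1, v = embLe 1 k hk u
  | 0, hk, _, _ => absurd hk (by omega)
  | 1, _, v, _ => ⟨v, (embLe_self 1 _ v).symm⟩
  | k + 2, _, Sum.inl x, hv => by
    obtain ⟨u, hu⟩ := exists_eq_embLe_one_of_gen_eq_one (k + 1) (by omega) x hv
    exact ⟨u, by rw [hu, embLe_succ 1 (k + 1) (by omega)]⟩
  | k + 2, _, Sum.inr _, hv => absurd hv (by simp [gen])

lemma gen_apply_zero_eq_one {k N : ℕ} (F : Fin (N + 1) ≃ LaaV k)
    (hmono : ∀ i j : Fin (N + 1), i ≤ j → gen k (F i) ≤ gen k (F j)) : gen k (F 0) = 1 := by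
  have h := hmono 0 (F.symm (embLe 0 k k.zero_le (ep 0 Fin.elim0).1)) (Fin.zero_le _)
  rw [Equiv.apply_symm_apply] at h
  exact le_antisymm (h.trans_eq (gen_embLe k 0 _ _)) (one_le_gen k _)

lemma gen_embLe_inr {j k : ℕ} (hj : j + 1 ≤ k) (w : Fin j → Fin 6) (t : Fin 4) :
    gen k (embLe (j + 1) k hj (Sum.inr (w, t))) = j + 1 :=
  gen_embLe k (j + 1) hj _

lemma ep_snoc (k : ℕ) (w : Fin k → Fin 6) (i : Fin 6) :
    ep (k + 1) (Fin.snoc w i) =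
      match i.val with
      | 0 => (Sum.inl (ep k w).1, Sum.inr (w, 0))
      | 1 => (Sum.inr (w, 0), Sum.inr (w, 1))
      | 2 => (Sum.inr (w, 0), Sum.inr (w, 2))
      | 3 => (Sum.inr (w, 1), Sum.inr (w, 3))
      | 4 => (Sum.inr (w, 2), Sum.inr (w, 3))
      | _ => (Sum.inr (w, 3), Sum.inl (ep k w).2) := by
  simp only [ep, Fin.snoc_castSucc, Fin.snoc_last]

lemma adj_of_ep {k : ℕ} {a b : LaaV k} (w : Fin k → Fin 6) (h : ep k w = (a, b))
    (hne : a ≠ b) : (laakso k).Adj a b := by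
  rw [laakso, fromRel_adj]
  exact ⟨hne, Or.inl ⟨w, h⟩⟩

section Gadget

variable {k : ℕ} (w : Fin k → Fin 6)

lemma inr_ne_inr {s t : Fin 4} (hst : s ≠ t) :
    (Sum.inr (w, s) : LaaV (k + 1)) ≠ Sum.inr (w, t) :=
  fun h => hst (congrArg Prod.snd (Sum.inr_injective h))

lemma adj_start_b : (laakso (k + 1)).Adj (Sum.inl (ep k w).1) (Sum.inr (w, 0)) :=
  adj_of_ep (Fin.snoc w 0) (by rw [ep_snoc]; rfl) Sum.inl_ne_inr

lemma adj_b_u : (laakso (k + 1)).Adj (Sum.inr (w, 0)) (Sum.inr (w, 1)) :=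
  adj_of_ep (Fin.snoc w 1) (by rw [ep_snoc]; rfl) (inr_ne_inr w (by simp))

lemma adj_b_v : (laakso (k + 1)).Adj (Sum.inr (w, 0)) (Sum.inr (w, 2)) :=
  adj_of_ep (Fin.snoc w 2) (by rw [ep_snoc]; rfl) (inr_ne_inr w (by simp))

lemma adj_u_c : (laakso (k + 1)).Adj (Sum.inr (w, 1)) (Sum.inr (w, 3)) :=
  adj_of_ep (Fin.snoc w 3) (by rw [ep_snoc]; rfl) (inr_ne_inr w (by simp))

lemma adj_v_c : (laakso (k + 1)).Adj (Sum.inr (w, 2)) (Sum.inr (w, 3)) :=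
  adj_of_ep (Fin.snoc w 4) (by rw [ep_snoc]; rfl) (inr_ne_inr w (by simp))

lemma adj_c_end : (laakso (k + 1)).Adj (Sum.inr (w, 3)) (Sum.inl (ep k w).2) :=
  adj_of_ep (Fin.snoc w 5) (by rw [ep_snoc]; rfl) Sum.inr_ne_inl

lemma exists_gadget_walks (t : Fin 4) :
    ∃ (p : (laakso (k + 1)).Walk (Sum.inr (w, t)) (Sum.inl (ep k w).1))
      (q : (laakso (k + 1)).Walk (Sum.inr (w, t)) (Sum.inl (ep k w).2)),
      p.length + q.length = 4 := by
  have ab := (adj_start_b w).symm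
  have bu := adj_b_u w
  have uc := adj_u_c w
  have cd := adj_c_end w
  fin_cases t
  · exact ⟨.cons ab .nil, .cons bu (.cons uc (.cons cd .nil)), rfl⟩
  · exact ⟨.cons bu.symm (.cons ab .nil), .cons uc (.cons cd .nil), rfl⟩
  · exact ⟨.cons (adj_b_v w).symm (.cons ab .nil), .cons (adj_v_c w) (.cons cd .nil), rfl⟩
  · exact ⟨.cons uc.symm (.cons bu.symm (.cons ab .nil)), .cons cd .nil, rfl⟩

lemma exists_walk_start_end :
    ∃ p : (laakso (k + 1)).Walk (Sum.inl (ep k w).1) (Sum.inl (ep k w).2), p.length = 4 :=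
  ⟨.cons (adj_start_b w) (.cons (adj_b_u w) (.cons (adj_u_c w) (.cons (adj_c_end w) .nil))),
    rfl⟩

end Gadget

lemma exists_walk_inl_of_adj {k : ℕ} {x y : LaaV k} (h : (laakso k).Adj x y) :
    ∃ p : (laakso (k + 1)).Walk (Sum.inl x) (Sum.inl y), p.length = 4 := by
  rw [laakso, fromRel_adj] at h
  obtain ⟨-, ⟨w, hw⟩ | ⟨w, hw⟩⟩ := h
  · obtain ⟨p, hp⟩ := exists_walk_start_end w
    exact ⟨p.copy (by rw [hw]) (by rw [hw]), (Walk.length_copy _ _ _).trans hp⟩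
  · obtain ⟨p, hp⟩ := exists_walk_start_end w
    exact ⟨(p.copy (by rw [hw]) (by rw [hw])).reverse,
      (Walk.length_reverse _).trans ((Walk.length_copy _ _ _).trans hp)⟩

lemma exists_walk_inl {k : ℕ} {x y : LaaV k} (p : (laakso k).Walk x y) :
    ∃ q : (laakso (k + 1)).Walk (Sum.inl x) (Sum.inl y), q.length = 4 * p.length := by
  induction p with
  | nil => exact ⟨.nil, rfl⟩
  | cons h _ ih =>
    obtain ⟨r, hr⟩ := exists_walk_inl_of_adj h
    obtain ⟨q, hq⟩ := ih
    refine ⟨r.append q, ?_⟩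
    have := Walk.length_append r q
    rw [Walk.length_cons]
    omega

lemma exists_walk_embLe : ∀ (k j : ℕ) (h : j ≤ k) {x y : LaaV j} (p : (laakso j).Walk x y),
    ∃ q : (laakso k).Walk (embLe j k h x) (embLe j k h y), q.length = 4 ^ (k - j) * p.length
  | 0, j, h, x, y, p => by
    obtain rfl : j = 0 := by omega
    exact ⟨p.copy (embLe_self 0 h x).symm (embLe_self 0 h y).symm, by simp⟩
  | k + 1, j, h, x, y, p => by
    by_cases hj : j = k + 1
    · subst hj
      exact ⟨p.copy (embLe_self _ h x).symm (embLe_self _ h y).symm, by simp⟩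
    · obtain ⟨q, hq⟩ := exists_walk_embLe k j (by omega) p
      obtain ⟨r, hr⟩ := exists_walk_inl q
      refine ⟨r.copy (embLe_succ j k _ h x).symm (embLe_succ j k _ h y).symm, ?_⟩
      rw [show k + 1 - j = k - j + 1 by omega, pow_succ]
      have := Walk.length_copy r (embLe_succ j k _ h x).symm (embLe_succ j k _ h y).symm
      rw [this, hr, hq]
      ring

theorem laakso_connected : ∀ k, (laakso k).Connected
  | 0 => by
    have h01 : (laakso 0).Adj (0 : Fin 2) (1 : Fin 2) := adj_of_ep Fin.elim0 rfl Fin.zero_ne_one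
    refine (connected_iff_exists_forall_reachable _).2 ⟨(0 : Fin 2), fun v => ?_⟩
    fin_cases v
    · rfl
    · exact h01.reachable
  | k + 1 => by
    obtain ⟨v, hv⟩ := (connected_iff_exists_forall_reachable _).1 (laakso_connected k)
    have reach_inl : ∀ x, (laakso (k + 1)).Reachable (Sum.inl v) (Sum.inl x) := fun x =>
      let ⟨p⟩ := hv x
      ⟨(exists_walk_inl p).choose⟩
    refine (connected_iff_exists_forall_reachable _).2 ⟨Sum.inl v, ?_⟩
    rintro (x | ⟨w, t⟩)
    · exact reach_inl x
    · obtain ⟨p, -, -⟩ := exists_gadget_walks w t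
      exact (reach_inl _).trans ⟨p.reverse⟩

lemma dist_embLe_le {j k : ℕ} (h : j ≤ k) (x y : LaaV j) :
    (laakso k).dist (embLe j k h x) (embLe j k h y) ≤ 4 ^ (k - j) * (laakso j).dist x y := by
  obtain ⟨p, hp⟩ := ((laakso_connected j).preconnected x y).exists_walk_length_eq_dist
  obtain ⟨q, hq⟩ := exists_walk_embLe k j h p
  exact hp ▸ hq ▸ dist_le q

lemma exists_walk_laakso_one_to_u (x : LaaV 1) :
    ∃ p : (laakso 1).Walk x (Sum.inr (Fin.elim0, 1)), p.length ≤ 2 := by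
  rcases x with i | ⟨w, t⟩
  · fin_cases i
    · exact ⟨.cons (adj_start_b Fin.elim0) (.cons (adj_b_u _) .nil), le_rfl⟩
    · exact ⟨.cons (adj_c_end Fin.elim0).symm (.cons (adj_u_c _).symm .nil), le_rfl⟩
  · obtain rfl : w = Fin.elim0 := funext fun i => i.elim0
    fin_cases t
    · exact ⟨.cons (adj_b_u _) .nil, by decide⟩
    · exact ⟨.nil, by decide⟩
    · exact ⟨.cons (adj_b_v _).symm (.cons (adj_b_u _) .nil), le_rfl⟩
    · exact ⟨.cons (adj_u_c _).symm .nil, by decide⟩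

lemma dist_laakso_one_le (x y : LaaV 1) : (laakso 1).dist x y ≤ 4 := by
  obtain ⟨p, hp⟩ := exists_walk_laakso_one_to_u x
  obtain ⟨q, hq⟩ := exists_walk_laakso_one_to_u y
  have := dist_le (p.append q.reverse)
  have := Walk.length_append p q.reverse
  have := Walk.length_reverse q
  omega

lemma dist_embLe_one_le {k : ℕ} (hk : 1 ≤ k) (x y : LaaV 1) :
    (laakso k).dist (embLe 1 k hk x) (embLe 1 k hk y) ≤ 4 ^ k :=
  calc _ ≤ 4 ^ (k - 1) * (laakso 1).dist x y := dist_embLe_le hk x y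
    _ ≤ 4 ^ (k - 1) * 4 := Nat.mul_le_mul_left _ (dist_laakso_one_le x y)
    _ = 4 ^ k := by rw [← pow_succ, Nat.sub_add_cancel hk]

/-- The position of a vertex of `L_k` along the segment `[0, 4^k]` onto which `L_k` folds. -/
def height : (k : ℕ) → LaaV k → ℤ
  | 0, x => x.val
  | k + 1, Sum.inl x => 4 * height k x
  | k + 1, Sum.inr (w, t) =>
    4 * height k (ep k w).1 + (height k (ep k w).2 - height k (ep k w).1) * ![1, 2, 2, 3] t

lemma height_ep_snd_sub_fst : ∀ (k : ℕ) (w : Fin k → Fin 6),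
    height k (ep k w).2 - height k (ep k w).1 = 1
  | 0, _ => rfl
  | k + 1, w => by
    obtain ⟨w', i, rfl⟩ : ∃ w' i, w = Fin.snoc w' i := ⟨_, _, (Fin.snoc_init_self w).symm⟩
    have ih := height_ep_snd_sub_fst k w'
    rw [ep_snoc]
    fin_cases i <;>
      simp only [height, Matrix.cons_val, Matrix.cons_val_one, Matrix.cons_val_zero] <;> linarith

lemma abs_height_sub_le_dist {k : ℕ} (x y : LaaV k) :
    |height k x - height k y| ≤ (laakso k).dist x y := by
  obtain ⟨p, hp⟩ := ((laakso_connected k).preconnected x y).exists_walk_length_eq_dist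
  rw [← hp]
  clear hp
  induction p with
  | nil => simp
  | @cons a c _ h p ih =>
    have hac : |height k a - height k c| = 1 := by
      rw [laakso, fromRel_adj] at h
      obtain ⟨-, ⟨w, hw⟩ | ⟨w, hw⟩⟩ := h <;> have h := height_ep_snd_sub_fst k w <;>
        simp only [hw] at h
      · rw [abs_sub_comm, h, abs_one]
      · rw [h, abs_one]
    calc _ ≤ |height k a - height k c| + |height k c - height k _| := abs_sub_le _ _ _
      _ ≤ _ := by rw [hac, Walk.length_cons]; push_cast; linarith

lemma dist_gadget_start_add_dist_gadget_end {k : ℕ} (w : Fin k → Fin 6) (t : Fin 4) :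
    (laakso (k + 1)).dist (Sum.inr (w, t)) (Sum.inl (ep k w).1)
      + (laakso (k + 1)).dist (Sum.inr (w, t)) (Sum.inl (ep k w).2) = 4 := by
  obtain ⟨p, q, hpq⟩ := exists_gadget_walks w t
  have hle := add_le_add (dist_le p) (dist_le q)
  have hstart_end :
      height (k + 1) (Sum.inl (ep k w).2) - height (k + 1) (Sum.inl (ep k w).1) = 4 := by
    change 4 * _ - 4 * _ = (4 : ℤ)
    rw [← mul_sub, height_ep_snd_sub_fst, mul_one]
  have hge : (4 : ℤ) ≤ (laakso (k + 1)).dist (Sum.inr (w, t)) (Sum.inl (ep k w).1)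
      + (laakso (k + 1)).dist (Sum.inr (w, t)) (Sum.inl (ep k w).2) := by
    have h1 := (le_abs_self _).trans
      (abs_height_sub_le_dist (k := k + 1) (Sum.inr (w, t)) (Sum.inl (ep k w).1))
    have h2 := (neg_le_abs _).trans
      (abs_height_sub_le_dist (k := k + 1) (Sum.inr (w, t)) (Sum.inl (ep k w).2))
    linarith
  omega

lemma tcNorm_basis_le_of_gen_eq_one {k : ℕ} (hk : 1 ≤ k) {x0 : LaaV k}
    {b : LaaV k → LaaV k → ℝ} (hb : IsLaaksoBasis k x0 b) (hx0 : gen k x0 = 1)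
    {n : LaaV k} (hn : gen k n = 1) (hne : n ≠ x0) :
    tcNorm (fun u v => ((laakso k).dist u v : ℝ)) x0 (b n) ≤ 4 ^ k := by
  rw [hb.1 n hn hne]
  refine (tcNorm_indic_sub_le (fun _ _ => Nat.cast_nonneg _) x0 n x0).trans ?_
  obtain ⟨u, rfl⟩ := exists_eq_embLe_one_of_gen_eq_one k hk n hn
  obtain ⟨u0, rfl⟩ := exists_eq_embLe_one_of_gen_eq_one k hk x0 hx0
  exact_mod_cast dist_embLe_one_le hk u u0

lemma tcNorm_basis_embLe_inr_le {k : ℕ} {x0 : LaaV k} {b : LaaV k → LaaV k → ℝ}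
    (hb : IsLaaksoBasis k x0 b) (j : ℕ) (hj : j + 1 ≤ k) (w : Fin j → Fin 6) (t : Fin 4) :
    tcNorm (fun u v => ((laakso k).dist u v : ℝ)) x0 (b (embLe (j + 1) k hj (Sum.inr (w, t))))
      ≤ 4 ^ (k - j) := by
  have hac : ((laakso (j + 1)).dist (Sum.inr (w, t)) (Sum.inl (ep j w).1) : ℝ)
      + (laakso (j + 1)).dist (Sum.inr (w, t)) (Sum.inl (ep j w).2) = 4 := by
    exact_mod_cast dist_gadget_start_add_dist_gadget_end w t
  set n := embLe (j + 1) k hj (Sum.inr (w, t))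
  set a : ℝ := ((laakso (j + 1)).dist (Sum.inr (w, t)) (Sum.inl (ep j w).1) : ℝ)
  set c : ℝ := ((laakso (j + 1)).dist (Sum.inr (w, t)) (Sum.inl (ep j w).2) : ℝ)
  set m := k - (j + 1)
  have hdist : ∀ y : LaaV j, ((laakso k).dist n (embLe j k (Nat.le_of_succ_le hj) y) : ℝ)
      ≤ 4 ^ m * (laakso (j + 1)).dist (Sum.inr (w, t)) (Sum.inl y) := by
    intro y
    rw [← embLe_inl hj]
    exact_mod_cast dist_embLe_le hj _ _
  rw [hb.2 j hj w t]
  calc _ ≤ (a * (laakso k).dist n (embLe j k _ (ep j w).2)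
          + c * (laakso k).dist n (embLe j k _ (ep j w).1)) / 4 :=
        tcNorm_indic_sub_avg_le (fun _ _ => Nat.cast_nonneg _) x0 _ _ _
          (Nat.cast_nonneg _) (Nat.cast_nonneg _) hac
    _ ≤ (a * (4 ^ m * c) + c * (4 ^ m * a)) / 4 := by
        gcongr <;> exact hdist _
    _ = 4 ^ m * (a * c) / 2 := by ring
    _ ≤ 4 ^ m * 4 / 2 := by gcongr; nlinarith [sq_nonneg (a - c)]
    _ ≤ 4 ^ (k - j) := by
        rw [show k - j = m + 1 by omega, pow_succ]
        linarith [pow_nonneg (zero_le_four : (0 : ℝ) ≤ 4) m]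

theorem statement13 (k N : ℕ) (hk : 1 ≤ k)
    (F : Fin (N+1) ≃ LaaV k)
    (hmono : ∀ i j : Fin (N+1), i ≤ j → gen k (F i) ≤ gen k (F j))
    (b : LaaV k → LaaV k → ℝ) (hb : IsLaaksoBasis k (F 0) b)
    (n : LaaV k) (hn : n ≠ F 0) :
    tcNorm (fun u v => ((laakso k).dist u v : ℝ)) (F 0) (b n)
      ≤ 4 ^ (k + 1 - gen k n) := by
  rcases Nat.lt_or_ge (gen k n) 2 with hg | hg
  · have hn1 : gen k n = 1 := le_antisymm (Nat.lt_succ_iff.1 hg) (one_le_gen k n)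
    rw [hn1, Nat.add_sub_cancel]
    exact tcNorm_basis_le_of_gen_eq_one hk hb (gen_apply_zero_eq_one F hmono) hn1 hn
  · obtain ⟨j, hj, w, t, rfl⟩ := exists_eq_embLe_inr_of_two_le_gen k n hg
    rw [gen_embLe_inr, Nat.add_sub_add_right]
    exact tcNorm_basis_embLe_inr_le hb j hj w t

end TCS
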